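/- arXiv:2504.19751 — 5 statements merged into one kernel-verified Lean document; each statement's English description precedes it below -/
import Mathlib

section
/- For every graph G, tw(G) + 1 ≤ α(G) · tree-χ(G), where tw is treewidth, α is the independence number, and tree-χ(G) is the minimum over tree-decompositions of G of the maximum chromatic number of a subgraph induced by a bag. -/
set_option maxHeartbeats 1000000

open SimpleGraph

structure TreeDecomp {V : Type} (G : SimpleGraph V) where
  ι : Type
  tree : SimpleGraph ι
  isTree : tree.IsTree
  bag : ι → Finset V
  covers_edge : ∀ ⦃u v : V⦄, G.Adj u v → ∃ t, u ∈ bag t ∧ v ∈ bag t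
  support_connected : ∀ v : V, (tree.induce {t | v ∈ bag t}).Connected

noncomputable def indepNum {V : Type} (G : SimpleGraph V) (s : Set V) : ℕ :=
  sSup {n | ∃ t : Finset V, ↑t ⊆ s ∧ (↑t : Set V).Pairwise (fun a b => ¬ G.Adj a b) ∧ t.card = n}

noncomputable def alpha {V : Type} (G : SimpleGraph V) : ℕ := indepNum G Set.univ

noncomputable def chiNat {V : Type} (G : SimpleGraph V) : ℕ := G.chromaticNumber.toNat

noncomputable def tw {V : Type} (G : SimpleGraph V) : ℕ :=
  sInf {w | ∃ D : TreeDecomp G, ∀ t, (D.bag t).card ≤ w + 1}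

noncomputable def treeAlpha {V : Type} (G : SimpleGraph V) : ℕ :=
  sInf {k | ∃ D : TreeDecomp G, ∀ t, indepNum G ↑(D.bag t) ≤ k}

noncomputable def treeChi {V : Type} (G : SimpleGraph V) : ℕ :=
  sInf {k | ∃ D : TreeDecomp G, ∀ t, chiNat (G.induce ↑(D.bag t)) ≤ k}

noncomputable def treeTw {V : Type} (G : SimpleGraph V) : ℕ :=
  sInf {k | ∃ D : TreeDecomp G, ∀ t, tw (G.induce ↑(D.bag t)) ≤ k}

noncomputable def omegaNum {V : Type} (G : SimpleGraph V) : ℕ :=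
  sSup {n | ∃ t : Finset V, G.IsClique ↑t ∧ t.card = n}

def completion {V : Type} (H : SimpleGraph V) :
    SimpleGraph (V ⊕ {p : Sym2 V // ¬ p.IsDiag ∧ p ∉ H.edgeSet}) :=
  SimpleGraph.fromRel (fun x y =>
    match x, y with
    | .inl u, .inl v => H.Adj u v
    | .inl u, .inr p => u ∈ p.1
    | _, _ => False)

lemma indep_le_alpha {V : Type} [Fintype V] (G : SimpleGraph V) (s : Finset V)
    (h : (↑s : Set V).Pairwise (fun a b => ¬ G.Adj a b)) : s.card ≤ alpha G := by
  apply le_csSup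
  · exact ⟨Fintype.card V, fun n hn => by
      obtain ⟨t, -, -, ht⟩ := hn; exact ht ▸ Finset.card_le_univ t⟩
  · exact ⟨s, by simp, h, rfl⟩

lemma card_le_alpha_mul_chi {V : Type} [Fintype V] (G : SimpleGraph V) (s : Finset V) :
    s.card ≤ alpha G * chiNat (G.induce ↑s) := by
  classical
  set H := G.induce (↑s : Set V) with hH
  have hcol : H.Colorable (chiNat H) := H.colorable_chromaticNumber_of_fintype
  obtain ⟨c⟩ := hcol
  set n := chiNat H
  have key : s.attach.card = ∑ i : Fin n,
      (s.attach.filter (fun x => c ⟨x.1, x.2⟩ = i)).card :=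
    Finset.card_eq_sum_card_fiberwise (fun x _ => Finset.mem_univ _)
  have hbound : ∀ i : Fin n,
      (s.attach.filter (fun x => c ⟨x.1, x.2⟩ = i)).card ≤ alpha G := by
    intro i
    set f := s.attach.filter (fun x => c ⟨x.1, x.2⟩ = i) with hf
    have hcard : (f.image Subtype.val).card = f.card :=
      Finset.card_image_of_injective f Subtype.val_injective
    have hpair : (↑(f.image Subtype.val) : Set V).Pairwise (fun a b => ¬ G.Adj a b) := by
      intro a ha b hb hab hadj
      rw [Finset.coe_image, Set.mem_image] at ha hb
      obtain ⟨⟨a', ha'⟩, hxa, rfl⟩ := ha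
      obtain ⟨⟨b', hb'⟩, hxb, rfl⟩ := hb
      have hca := (Finset.mem_filter.mp (Finset.mem_coe.mp hxa)).2
      have hcb := (Finset.mem_filter.mp (Finset.mem_coe.mp hxb)).2
      have : H.Adj ⟨a', ha'⟩ ⟨b', hb'⟩ := hadj
      exact c.valid this (hca.trans hcb.symm)
    calc f.card = (f.image Subtype.val).card := hcard.symm
      _ ≤ alpha G := indep_le_alpha G _ hpair
  have : s.card = s.attach.card := (Finset.card_attach).symm
  rw [this, key]
  calc (∑ i : Fin n, (s.attach.filter (fun x => c ⟨x.1, x.2⟩ = i)).card)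
      ≤ ∑ _i : Fin n, alpha G := Finset.sum_le_sum (fun i _ => hbound i)
    _ = n * alpha G := by simp [Finset.sum_const, mul_comm]
    _ = alpha G * n := mul_comm _ _

lemma conn_of_subsingleton {W : Type} [Subsingleton W] [Nonempty W] (H : SimpleGraph W) :
    H.Connected := ⟨fun a b => by rw [Subsingleton.elim a b]⟩

def trivialDecomp {V : Type} (G : SimpleGraph V) [Fintype V] : TreeDecomp G where
  ι := Unit
  tree := ⊥
  isTree := by
    refine ⟨conn_of_subsingleton _, ?_⟩
    intro v p hp
    cases p with
    | nil => exact absurd hp (by simp [SimpleGraph.Walk.isCycle_def])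
    | cons h p => exact absurd h (by simp)
  bag := fun _ => Finset.univ
  covers_edge := fun u v _ => ⟨(), by simp⟩
  support_connected := fun v => by
    haveI : Nonempty ↑{t : Unit | v ∈ (Finset.univ : Finset V)} := ⟨⟨(), by simp⟩⟩
    exact conn_of_subsingleton _

theorem stmt1 {V : Type} [Fintype V] [Nonempty V] (G : SimpleGraph V) :
    tw G + 1 ≤ alpha G * treeChi G := by
  classical
  have hne : {k | ∃ D : TreeDecomp G, ∀ t, chiNat (G.induce ↑(D.bag t)) ≤ k}.Nonempty := by
    refine ⟨chiNat (G.induce ↑(Finset.univ : Finset V)), trivialDecomp G, fun t => ?_⟩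
    have h : (trivialDecomp G).bag t = Finset.univ := rfl
    rw [h]
  have hmem := Nat.sInf_mem hne
  obtain ⟨D, hD⟩ := hmem
  set k := treeChi G with hk
  -- k ≥ 1
  obtain ⟨v⟩ := ‹Nonempty V›
  obtain ⟨⟨t₀, ht₀⟩⟩ := (D.support_connected v).nonempty
  have hk1 : 1 ≤ k := by
    refine le_trans ?_ (hD t₀)
    haveI hne' : Nonempty (↑((D.bag t₀ : Finset V) : Set V)) := ⟨⟨v, ht₀⟩⟩
    have hcol := (G.induce ↑(D.bag t₀)).colorable_chromaticNumber_of_fintype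
    have hpos := SimpleGraph.chromaticNumber_pos (G := G.induce ↑(D.bag t₀)) hcol
    have hne'' : (G.induce ↑(D.bag t₀)).chromaticNumber ≠ ⊤ := by
      have hle := hcol.chromaticNumber_le
      intro h; rw [h] at hle; exact absurd hle (by simp)
    rw [Nat.one_le_iff_ne_zero]
    intro h0
    rcases ENat.toNat_eq_zero.mp h0 with h | h
    · rw [h] at hpos; exact lt_irrefl _ hpos
    · exact hne'' h
  have hcard : ∀ t, (D.bag t).card ≤ alpha G * k := by
    intro t
    calc (D.bag t).card ≤ alpha G * chiNat (G.induce ↑(D.bag t)) :=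
          card_le_alpha_mul_chi G (D.bag t)
      _ ≤ alpha G * k := Nat.mul_le_mul_left _ (hD t)
  have halpha : 1 ≤ alpha G := by
    have := indep_le_alpha G {v} (by simp)
    simpa using this
  have hak : 1 ≤ alpha G * k := by
    have := Nat.mul_le_mul halpha hk1; simpa using this
  have htw : tw G ≤ alpha G * k - 1 := by
    apply Nat.sInf_le
    exact ⟨D, fun t => by rw [Nat.sub_add_cancel hak]; exact hcard t⟩
  omega
end

section
/- For every graph G, tw(G) + 1 ≤ tree-α(G) · χ(G), where tree-α(G) is the minimum over tree-decompositions of G of the maximum independence number of a subgraph induced by a bag. -/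
open SimpleGraph

/-
Take a tree-decomposition whose bags all have independence number at most tree-α(G). Restricting
an optimal proper colouring of G to a bag X splits X into χ(G) independent sets, each of size at
most α(G[X]), so every bag has at most tree-α(G) · χ(G) vertices.
-/

namespace TreeDecomp

variable {V : Type} {G : SimpleGraph V}

noncomputable def univ [Fintype V] (G : SimpleGraph V) : TreeDecomp G where
  ι := Unit
  tree := ⊥
  isTree := ⟨.of_subsingleton, isAcyclic_bot⟩
  bag _ := Finset.univ
  covers_edge _ _ _ := ⟨(), Finset.mem_univ _, Finset.mem_univ _⟩
  support_connected v := @Connected.of_subsingleton _ _ ⟨⟨(), Finset.mem_univ v⟩⟩ _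

lemma exists_mem_bag (D : TreeDecomp G) (v : V) : ∃ t, v ∈ D.bag t :=
  let ⟨⟨t, ht⟩⟩ := (D.support_connected v).nonempty
  ⟨t, ht⟩

end TreeDecomp

section

variable {V : Type} {G : SimpleGraph V}

lemma bddAbove_indepNum_finset (G : SimpleGraph V) (X : Finset V) :
    BddAbove {n | ∃ t : Finset V, ↑t ⊆ (↑X : Set V) ∧
      (↑t : Set V).Pairwise (fun a b => ¬ G.Adj a b) ∧ t.card = n} :=
  ⟨X.card, fun _ ⟨_, htX, _, h⟩ => h ▸ Finset.card_le_card (Finset.coe_subset.mp htX)⟩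

lemma card_le_indepNum_of_isIndepSet {X t : Finset V} (ht : G.IsIndepSet ↑t) (htX : t ⊆ X) :
    t.card ≤ indepNum G ↑X :=
  le_csSup (bddAbove_indepNum_finset G X) ⟨t, Finset.coe_subset.mpr htX, ht, rfl⟩

lemma card_le_indepNum_mul_of_colorable [DecidableEq V] {n : ℕ} (hG : G.Colorable n)
    (X : Finset V) : X.card ≤ indepNum G ↑X * n := by
  obtain ⟨C⟩ := hG
  simpa using Finset.card_le_mul_card_image_of_maps_to (f := C) (t := Finset.univ)
    (fun _ _ => Finset.mem_univ _) (indepNum G ↑X) fun c _ =>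
      card_le_indepNum_of_isIndepSet
        ((C.isIndepSet_colorClass c).mono fun v hv => (Finset.mem_filter.mp hv).2)
        (Finset.filter_subset _ X)

lemma card_le_indepNum_mul_chiNat [Fintype V] (G : SimpleGraph V) (X : Finset V) :
    X.card ≤ indepNum G ↑X * chiNat G := by
  classical
  exact card_le_indepNum_mul_of_colorable (colorable_chromaticNumber_of_fintype G) X

lemma exists_treeDecomp_indepNum_le_treeAlpha [Fintype V] (G : SimpleGraph V) :
    ∃ D : TreeDecomp G, ∀ t, indepNum G ↑(D.bag t) ≤ treeAlpha G :=
  Nat.sInf_mem (s := {k | ∃ D : TreeDecomp G, ∀ t, indepNum G ↑(D.bag t) ≤ k})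
    ⟨indepNum G ↑(Finset.univ : Finset V), TreeDecomp.univ G, fun _ => le_rfl⟩

lemma tw_lt_of_forall_card_bag_le [Nonempty V] (D : TreeDecomp G) {k : ℕ}
    (hD : ∀ t, (D.bag t).card ≤ k) : tw G < k := by
  obtain ⟨t, ht⟩ := D.exists_mem_bag (Classical.arbitrary V)
  have hk : 0 < k := (Finset.card_pos.mpr ⟨_, ht⟩).trans_le (hD t)
  have : tw G ≤ k - 1 := Nat.sInf_le ⟨D, fun t => by have := hD t; omega⟩
  omega

end

theorem stmt2 {V : Type} [Fintype V] [Nonempty V] (G : SimpleGraph V) :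
    tw G + 1 ≤ treeAlpha G * chiNat G := by
  obtain ⟨D, hD⟩ := exists_treeDecomp_indepNum_le_treeAlpha G
  exact tw_lt_of_forall_card_bag_le D fun t =>
    (card_le_indepNum_mul_chiNat G _).trans (Nat.mul_le_mul_right _ (hD t))
end

section
/- If H is a graph with at least one edge, then tree-χ(C(H)) = tree-χ(H), where C(H) is the 1-completion of H. -/
open SimpleGraph

/-!
Restricting a tree-decomposition of `C(H)` to `V` gives one of `H` whose bags induce subgraphs
of the old ones. Conversely, take a tree-decomposition of `H` with `k`-colourable bags; `k ≥ 2`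
since `H` has an edge. For a non-edge `p = uv`, either some bag contains `u` and `v`, and a new
leaf bag `{u, v, p}` is hung on it, or `p` is added to every bag on a tree path from a bag
containing `u` to one containing `v`, and a leaf bag `{u, p}` is hung at its start. Leaf bags are
bipartite, and the vertices added to an old bag are independent and each sees at most one of
its neighbours there, so a `k`-colouring of the old bag extends.
-/

theorem chiNat_le_iff_colorable {W : Type} [Finite W] {G : SimpleGraph W} {k : ℕ} :
    chiNat G ≤ k ↔ G.Colorable k := by
  obtain ⟨n, hn⟩ := ENat.ne_top_iff_exists.1
    (chromaticNumber_ne_top_iff_exists.2 ⟨_, G.colorable_chromaticNumber_of_fintype⟩)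
  rw [← chromaticNumber_le_iff_colorable, chiNat, ← hn, ENat.toNat_natCast, Nat.cast_le]

theorem chiNat_le_of_hom {W W' : Type} [Finite W'] {G : SimpleGraph W} {G' : SimpleGraph W'}
    (f : G →g G') : chiNat G ≤ chiNat G' :=
  ENat.toNat_le_toNat (chromaticNumber_mono_of_hom f)
    (chromaticNumber_ne_top_iff_exists.2 ⟨_, G'.colorable_chromaticNumber_of_fintype⟩)

namespace SimpleGraph

variable {W W' : Type*} {G : SimpleGraph W}

noncomputable def Embedding.isoInduceImage {G' : SimpleGraph W'} (f : G ↪g G') (s : Set W) :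
    G.induce s ≃g G'.induce (f '' s) where
  toEquiv := Equiv.Set.image f s f.injective
  map_rel_iff' := f.map_adj_iff

theorem Connected.induce_union_of_forall_adj {S T : Set W} (hS : (G.induce S).Connected)
    (hT : ∀ x ∈ T, ∃ s ∈ S, G.Adj x s) : (G.induce (S ∪ T)).Connected := by
  obtain ⟨⟨u, hu⟩⟩ := hS.nonempty
  have reach_S (s : W) (hs : s ∈ S) :
      (G.induce (S ∪ T)).Reachable ⟨u, .inl hu⟩ ⟨s, .inl hs⟩ :=
    (hS.preconnected ⟨u, hu⟩ ⟨s, hs⟩).map (G.induceHomOfLE Set.subset_union_left).toHom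
  rw [connected_iff_exists_forall_reachable]
  refine ⟨⟨u, .inl hu⟩, ?_⟩
  rintro ⟨x, hx | hx⟩
  · exact reach_S x hx
  · obtain ⟨s, hs, hadj⟩ := hT x hx
    exact (reach_S s hs).trans (Adj.reachable (show (G.induce (S ∪ T)).Adj _ _ from hadj.symm))

theorem induce_singleton_connected (v : W) : (G.induce {v}).Connected := by
  rw [induce_singleton_eq_top]
  exact connected_top

theorem Colorable.induce_union_of_le_one_neighbor {A X : Set W} {n : ℕ} (hn : 2 ≤ n)
    (hA : (G.induce A).Colorable n) (hX : ∀ x ∈ X, ∀ y ∈ X, ¬ G.Adj x y)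
    (hXA : ∀ x ∈ X, ∀ y ∈ A, ∀ z ∈ A, G.Adj x y → G.Adj x z → y = z) :
    (G.induce (A ∪ X)).Colorable n := by
  classical
  obtain ⟨c⟩ := hA
  have : Nontrivial (Fin n) := Fin.nontrivial_iff_two_le.2 hn
  have free_color (x : W) :
      ∃ i : Fin n, x ∈ X → ∀ y (hy : y ∈ A), G.Adj x y → c ⟨y, hy⟩ ≠ i := by
    by_cases h : ∃ y ∈ A, x ∈ X ∧ G.Adj x y
    · obtain ⟨y, hy, hx, hxy⟩ := h
      obtain ⟨i, hi⟩ := exists_ne (c ⟨y, hy⟩)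
      exact ⟨i, fun _ z hz hxz => hXA x hx y hy z hz hxy hxz ▸ hi.symm⟩
    · push Not at h
      exact ⟨⟨0, by omega⟩, fun hx y hy hxy => absurd hxy (h y hy hx)⟩
  choose col hcol using free_color
  refine ⟨Coloring.mk (fun x => if hx : x.1 ∈ A then c ⟨x.1, hx⟩ else col x.1) ?_⟩
  rintro ⟨x, hx⟩ ⟨y, hy⟩ hxy
  replace hxy : G.Adj x y := hxy
  by_cases hxA : x ∈ A <;> by_cases hyA : y ∈ A <;> simp only [hxA, hyA, dite_true, dite_false]
  · exact c.valid hxy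
  · exact hcol y (hy.resolve_left hyA) x hxA hxy.symm
  · exact (hcol x (hx.resolve_left hxA) y hyA hxy).symm
  · exact absurd hxy (hX x (hx.resolve_left hxA) y (hy.resolve_left hyA))

variable {ι σ : Type*} {T : SimpleGraph ι} {anchor : σ → ι}

variable (T anchor) in
def addLeaves : SimpleGraph (ι ⊕ σ) where
  Adj
    | .inl s, .inl t => T.Adj s t
    | .inl s, .inr p | .inr p, .inl s => anchor p = s
    | .inr _, .inr _ => False
  symm := ⟨by rintro (s | p) (t | q) h <;> first | exact h.symm | exact h⟩
  loopless := ⟨by rintro (s | p) h <;> first | exact T.loopless.irrefl s h | exact h⟩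

variable (T anchor) in
def addLeavesEmbedding : T ↪g T.addLeaves anchor where
  toEmbedding := .inl
  map_rel_iff' := Iff.rfl

theorem Connected.addLeaves (hT : T.Connected) : (T.addLeaves anchor).Connected := by
  have := hT.nonempty
  have reach_inl (s t : ι) : (T.addLeaves anchor).Reachable (.inl s) (.inl t) :=
    (hT.preconnected s t).map (addLeavesEmbedding T anchor).toHom
  have reach_anchor (p : σ) : (T.addLeaves anchor).Reachable (.inr p) (.inl (anchor p)) :=
    Adj.reachable rfl
  refine (connected_iff_exists_forall_reachable _).2 ⟨.inl (Classical.arbitrary ι), ?_⟩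
  rintro (t | p)
  · exact reach_inl _ t
  · exact (reach_inl _ _).trans (reach_anchor p).symm

theorem IsAcyclic.addLeaves (hT : T.IsAcyclic) : (T.addLeaves anchor).IsAcyclic := by
  intro x c hc
  by_cases hleft : ∀ y ∈ c.support, y ∈ Set.range Sum.inl
  · -- `c` lives on the copy of `T`, on which `Sum.elim id anchor` is an injective homomorphism
    have hinj : Function.Injective
        (Embedding.induce (G := T.addLeaves anchor) (Set.range Sum.inl)).toHom :=
      Subtype.val_injective
    have hc' : (c.induce _ hleft).IsCycle := by
      rwa [← Walk.isCycle_map_iff_of_injective hinj, Walk.map_induce]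
    refine hT.comap ⟨fun y => Sum.elim id anchor y.1, ?_⟩ ?_ _ hc'
    · rintro ⟨_, s, rfl⟩ ⟨_, t, rfl⟩ hst
      exact hst
    · rintro ⟨_, s, rfl⟩ ⟨_, t, rfl⟩ hst
      cases hst
      rfl
  · -- a leaf has only one neighbour, but every vertex of a cycle has two
    push Not at hleft
    obtain ⟨y, hy, hyr⟩ := hleft
    obtain ⟨p, rfl⟩ : ∃ p, y = .inr p := by cases y <;> simp_all
    have hsub : c.toSubgraph.neighborSet (.inr p) ⊆ {.inl (anchor p)} := by
      rintro (t | q) h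
      · rw [Set.mem_singleton_iff, ((c.toSubgraph.adj_sub h : _) : anchor p = t)]
      · exact (c.toSubgraph.adj_sub h).elim
    have := Set.ncard_le_ncard hsub
    rw [hc.ncard_neighborSet_toSubgraph_eq_two hy, Set.ncard_singleton] at this
    omega

theorem IsTree.addLeaves (hT : T.IsTree) : (T.addLeaves anchor).IsTree :=
  ⟨hT.connected.addLeaves, hT.isAcyclic.addLeaves⟩

end SimpleGraph

namespace TreeDecomp

variable {W W' : Type} {G : SimpleGraph W} {G' : SimpleGraph W'}

noncomputable def ofSetBags [Finite W] {ι : Type} (T : SimpleGraph ι) (hT : T.IsTree)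
    (B : ι → Set W) (covers : ∀ ⦃u v : W⦄, G.Adj u v → ∃ t, u ∈ B t ∧ v ∈ B t)
    (connected : ∀ v : W, (T.induce {t | v ∈ B t}).Connected) : TreeDecomp G where
  ι := ι
  tree := T
  isTree := hT
  bag t := (B t).toFinite.toFinset
  covers_edge := by simpa only [Set.Finite.mem_toFinset] using covers
  support_connected v := by
    rw [show {t | v ∈ (B t).toFinite.toFinset} = {t | v ∈ B t} from
      Set.ext fun _ => Set.Finite.mem_toFinset _]
    exact connected v

theorem coe_bag_ofSetBags [Finite W] {ι : Type} {T : SimpleGraph ι} {hT : T.IsTree}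
    {B : ι → Set W} {covers connected} (t : (ofSetBags (G := G) T hT B covers connected).ι) :
    ((ofSetBags T hT B covers connected).bag t : Set W) = B t :=
  Set.Finite.coe_toFinset _

noncomputable def comap (D : TreeDecomp G') (f : G ↪g G') : TreeDecomp G where
  ι := D.ι
  tree := D.tree
  isTree := D.isTree
  bag t := (D.bag t).preimage f f.injective.injOn
  covers_edge u v huv := by
    simpa only [Finset.mem_preimage] using D.covers_edge (f.map_adj_iff.2 huv)
  support_connected v := by
    rw [show {t | v ∈ (D.bag t).preimage f _} = {t | f v ∈ D.bag t} from
      Set.ext fun _ => Finset.mem_preimage]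
    exact D.support_connected (f v)

theorem chiNat_induce_comap_bag_le (D : TreeDecomp G') (f : G ↪g G') (t : D.ι) :
    chiNat (G.induce ((D.comap f).bag t : Set W)) ≤ chiNat (G'.induce (D.bag t : Set W')) :=
  chiNat_le_of_hom (induceHom f.toHom fun _ hv => by simpa [comap] using hv)

theorem two_le_of_chiNat_bag_le (D : TreeDecomp G) (hG : G.edgeSet.Nonempty) {k : ℕ}
    (hD : ∀ t, chiNat (G.induce (D.bag t : Set W)) ≤ k) : 2 ≤ k := by
  obtain ⟨e, he⟩ := hG
  induction e using Sym2.ind with | _ u v => ?_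
  obtain ⟨t, hu, hv⟩ := D.covers_edge he
  have h2 := two_le_chromaticNumber_of_adj (G := G.induce (D.bag t : Set W))
    (u := ⟨u, hu⟩) (v := ⟨v, hv⟩) he
  exact_mod_cast h2.trans (chromaticNumber_le_iff_colorable.2 (chiNat_le_iff_colorable.1 (hD t)))

end TreeDecomp

section Completion

variable {V : Type} {H : SimpleGraph V}

abbrev NonEdge (H : SimpleGraph V) : Type := {p : Sym2 V // ¬ p.IsDiag ∧ p ∉ H.edgeSet}

theorem NonEdge.not_adj (p : NonEdge H) {u v : V} (hu : u ∈ p.1) (hv : v ∈ p.1) :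
    ¬ H.Adj u v :=
  fun huv => p.2.2 (by rwa [(Sym2.mem_and_mem_iff huv.ne).1 ⟨hu, hv⟩])

@[simp] theorem completion_adj_inl_inl {u v : V} :
    (completion H).Adj (.inl u) (.inl v) ↔ H.Adj u v := by
  simp only [completion, fromRel_adj, ne_eq, Sum.inl.injEq]
  exact ⟨fun ⟨_, h⟩ => h.elim id .symm, fun h => ⟨h.ne, .inl h⟩⟩

@[simp] theorem completion_adj_inl_inr {u : V} {p : NonEdge H} :
    (completion H).Adj (.inl u) (.inr p) ↔ u ∈ p.1 := by
  simp [completion]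

@[simp] theorem completion_adj_inr_inl {u : V} {p : NonEdge H} :
    (completion H).Adj (.inr p) (.inl u) ↔ u ∈ p.1 := by
  rw [adj_comm, completion_adj_inl_inr]

@[simp] theorem completion_adj_inr_inr {p q : NonEdge H} :
    (completion H).Adj (.inr p) (.inr q) ↔ False := by
  simp [completion]

variable (H) in
def completionEmbedding : H ↪g completion H where
  toEmbedding := .inl
  map_rel_iff' := completion_adj_inl_inl

theorem completion_induce_colorable_two {s : Set (V ⊕ NonEdge H)}
    (hs : ∀ u v, .inl u ∈ s → .inl v ∈ s → ¬ H.Adj u v) :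
    ((completion H).induce s).Colorable 2 := by
  refine ⟨Coloring.mk (fun x => Sum.elim (fun _ => 0) (fun _ => 1) x.1) ?_⟩
  rintro ⟨u | p, hx⟩ ⟨v | q, hy⟩ hxy
  · exact absurd hxy (by simpa using hs u v hx hy)
  all_goals simp_all

end Completion

namespace TreeDecomp

variable {V : Type} {G : SimpleGraph V}

/-- `P` is the set of nodes whose bags receive the vertex subdividing `e`, and `a` the node at
which its leaf bag is hung. -/
structure IsRoute (D : TreeDecomp G) (e : Sym2 V) (a : D.ι) (P : Set D.ι) : Prop where
  covers : ∀ w ∈ e, w ∈ D.bag a ∨ ∃ m ∈ P, w ∈ D.bag m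
  separates : ∀ m ∈ P, ∃ w ∈ e, w ∉ D.bag m
  connected : P = ∅ ∨ a ∈ P ∧ (D.tree.induce P).Connected

theorem exists_isRoute (D : TreeDecomp G) (e : Sym2 V) : ∃ a P, D.IsRoute e a P := by
  induction e using Sym2.ind with | _ u v => ?_
  by_cases hcommon : ∃ t, u ∈ D.bag t ∧ v ∈ D.bag t
  · obtain ⟨t, hu, hv⟩ := hcommon
    refine ⟨t, ∅, ⟨?_, by simp, .inl rfl⟩⟩
    rintro w hw
    rcases Sym2.mem_iff.1 hw with rfl | rfl
    exacts [.inl hu, .inl hv]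
  · obtain ⟨⟨a, ha⟩⟩ := (D.support_connected u).nonempty
    obtain ⟨⟨b, hb⟩⟩ := (D.support_connected v).nonempty
    obtain ⟨w⟩ := D.isTree.connected.preconnected a b
    refine ⟨a, {m | m ∈ w.support},
      ⟨?_, ?_, .inr ⟨w.start_mem_support, w.connected_induce_support⟩⟩⟩
    · rintro x hx
      rcases Sym2.mem_iff.1 hx with rfl | rfl
      exacts [.inl ha, .inr ⟨b, w.end_mem_support, hb⟩]
    · intro m _
      by_contra! h
      exact hcommon ⟨m, h u (Sym2.mem_mk_left u v), h v (Sym2.mem_mk_right u v)⟩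

end TreeDecomp

section CompletionDecomp

variable {V : Type} {H : SimpleGraph V} (D : TreeDecomp H) (a : NonEdge H → D.ι)
  (P : NonEdge H → Set D.ι)

def completionBag : D.ι ⊕ NonEdge H → Set (V ⊕ NonEdge H)
  | .inl t => Sum.inl '' D.bag t ∪ Sum.inr '' {p | t ∈ P p}
  | .inr p => Sum.inl '' {w | w ∈ p.1 ∧ w ∈ D.bag (a p)} ∪ {.inr p}

variable {D a P}

theorem completionBag_covers (hroute : ∀ p, D.IsRoute p.1 (a p) (P p)) ⦃x y : V ⊕ NonEdge H⦄
    (hxy : (completion H).Adj x y) :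
    ∃ i, x ∈ completionBag D a P i ∧ y ∈ completionBag D a P i := by
  have covers_inl_inr {u : V} {p : NonEdge H} (hu : u ∈ p.1) :
      ∃ i, .inl u ∈ completionBag D a P i ∧ .inr p ∈ completionBag D a P i := by
    rcases (hroute p).covers u hu with hua | ⟨m, hm, hum⟩
    · exact ⟨.inr p, by simp [completionBag, hu, hua]⟩
    · exact ⟨.inl m, by simp [completionBag, hum, hm]⟩
  rcases x with u | p <;> rcases y with v | q
  · obtain ⟨t, hu, hv⟩ := D.covers_edge (completion_adj_inl_inl.1 hxy)
    exact ⟨.inl t, by simp [completionBag, hu, hv]⟩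
  · exact covers_inl_inr (completion_adj_inl_inr.1 hxy)
  · obtain ⟨i, hv, hp⟩ := covers_inl_inr (completion_adj_inr_inl.1 hxy)
    exact ⟨i, hp, hv⟩
  · exact (completion_adj_inr_inr.1 hxy).elim

theorem completionBag_support_connected (hroute : ∀ p, D.IsRoute p.1 (a p) (P p))
    (x : V ⊕ NonEdge H) :
    ((D.tree.addLeaves a).induce {i | x ∈ completionBag D a P i}).Connected := by
  have image_connected {S : Set D.ι} (hS : (D.tree.induce S).Connected) :=
    ((addLeavesEmbedding D.tree a).isoInduceImage S).connected_iff.1 hS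
  rcases x with w | p
  · have hsupp : {i | .inl w ∈ completionBag D a P i}
        = Sum.inl '' {t | w ∈ D.bag t} ∪ Sum.inr '' {p | w ∈ p.1 ∧ w ∈ D.bag (a p)} := by
      ext (t | p) <;> simp [completionBag]
    rw [hsupp]
    refine (image_connected (D.support_connected w)).induce_union_of_forall_adj ?_
    rintro _ ⟨p, ⟨-, hw⟩, rfl⟩
    exact ⟨.inl (a p), ⟨a p, hw, rfl⟩, rfl⟩
  · have hsupp : {i | .inr p ∈ completionBag D a P i} = Sum.inl '' P p ∪ {.inr p} := by
      ext (t | q) <;> simp [completionBag, eq_comm]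
    rw [hsupp]
    rcases (hroute p).connected with hP | ⟨haP, hP⟩
    · rw [hP, Set.image_empty, Set.empty_union]
      exact induce_singleton_connected _
    · refine (image_connected hP).induce_union_of_forall_adj ?_
      rintro _ rfl
      exact ⟨.inl (a p), ⟨a p, haP, rfl⟩, rfl⟩

theorem completionBag_colorable (hroute : ∀ p, D.IsRoute p.1 (a p) (P p)) {k : ℕ} (hk : 2 ≤ k)
    (hD : ∀ t, (H.induce (D.bag t : Set V)).Colorable k) (i : D.ι ⊕ NonEdge H) :
    ((completion H).induce (completionBag D a P i)).Colorable k := by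
  rcases i with t | q
  · refine Colorable.induce_union_of_le_one_neighbor hk ?_ ?_ ?_
    · exact (colorable_congr ((completionEmbedding H).isoInduceImage _)).1 (hD t)
    · rintro _ ⟨p, -, rfl⟩ _ ⟨q, -, rfl⟩
      exact completion_adj_inr_inr.1
    · rintro _ ⟨p, hp, rfl⟩ _ ⟨u, hu, rfl⟩ _ ⟨v, hv, rfl⟩ hpu hpv
      rw [completion_adj_inr_inl] at hpu hpv
      obtain ⟨w, hw, hwt⟩ := (hroute p).separates t hp
      by_contra huv
      rw [(Sym2.mem_and_mem_iff (ne_of_apply_ne Sum.inl huv)).1 ⟨hpu, hpv⟩,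
        Sym2.mem_iff] at hw
      rcases hw with rfl | rfl <;> contradiction
  · refine (completion_induce_colorable_two fun u v hu hv => ?_).mono hk
    simp only [completionBag, Set.mem_union, Set.mem_image, Sum.inl.injEq, exists_eq_right,
      Set.mem_ofPred_eq, Set.mem_singleton_iff, reduceCtorEq, or_false] at hu hv
    exact q.not_adj hu.1 hv.1

end CompletionDecomp

theorem TreeDecomp.exists_completion_chiNat_bag_le {V : Type} [Fintype V] {H : SimpleGraph V}
    (D : TreeDecomp H) {k : ℕ} (hk : 2 ≤ k)
    (hD : ∀ t, chiNat (H.induce (D.bag t : Set V)) ≤ k) :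
    ∃ D' : TreeDecomp (completion H),
      ∀ i, chiNat ((completion H).induce (D'.bag i : Set _)) ≤ k := by
  choose a P hroute using fun p : NonEdge H => D.exists_isRoute p.1
  refine ⟨ofSetBags _ D.isTree.addLeaves _ (completionBag_covers hroute)
    (completionBag_support_connected hroute), fun i => ?_⟩
  rw [coe_bag_ofSetBags, chiNat_le_iff_colorable]
  exact completionBag_colorable hroute hk (fun t => chiNat_le_iff_colorable.1 (hD t)) i

theorem stmt5 {V : Type} [Fintype V] (H : SimpleGraph V) (hE : H.edgeSet.Nonempty) :
    treeChi (completion H) = treeChi H :=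
  congrArg sInf <| Set.ext fun _ =>
    ⟨fun ⟨D, hD⟩ => ⟨D.comap (completionEmbedding H),
        fun t => (D.chiNat_induce_comap_bag_le _ t).trans (hD t)⟩,
      fun ⟨D, hD⟩ => D.exists_completion_chiNat_bag_le (D.two_le_of_chiNat_bag_le hE hD) hD⟩
end

section
/- If there exists a graph homomorphism from G to H, then tree-χ(G) ≤ tree-χ(H). -/
open SimpleGraph

set_option maxHeartbeats 1000000 in
theorem stmt11 {V W : Type} [Fintype V] [Fintype W] (G : SimpleGraph V)
    (H : SimpleGraph W) (f : G →g H) : treeChi G ≤ treeChi H := by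
  classical
  have hne : {k | ∃ D : TreeDecomp H, ∀ t, chiNat (H.induce ↑(D.bag t)) ≤ k}.Nonempty := by
    have htree : (⊥ : SimpleGraph Unit).IsTree := by
      constructor
      · rw [connected_iff]
        exact ⟨fun a b => by obtain rfl := Subsingleton.elim a b; exact Reachable.refl _, ⟨()⟩⟩
      · exact isAcyclic_bot
    have hsupp : ∀ v : W, ((⊥ : SimpleGraph Unit).induce {t | v ∈ (Finset.univ : Finset W)}).Connected := by
      intro v
      rw [connected_iff]
      exact ⟨fun a b => by obtain rfl := Subsingleton.elim a b; exact Reachable.refl _, ⟨⟨(), by simp⟩⟩⟩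
    refine ⟨chiNat (H.induce ↑(Finset.univ : Finset W)),
      ⟨Unit, ⊥, htree, fun _ => Finset.univ,
        fun u v _ => ⟨(), by simp, by simp⟩, fun v => ?_⟩, ?_⟩
    · exact hsupp v
    · intro t
      exact le_refl _
  have hmem := Nat.sInf_mem hne
  obtain ⟨D, hD⟩ := hmem
  set k := sInf {k | ∃ D : TreeDecomp H, ∀ t, chiNat (H.induce ↑(D.bag t)) ≤ k} with hk
  have key : ∃ D' : TreeDecomp G, ∀ t, chiNat (G.induce ↑(D'.bag t)) ≤ k := by
    refine ⟨⟨D.ι, D.tree, D.isTree, fun t => Finset.univ.filter (fun v => f v ∈ D.bag t),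
      ?_, ?_⟩, ?_⟩
    · intro u v huv
      obtain ⟨t, h1, h2⟩ := D.covers_edge (f.map_adj huv)
      exact ⟨t, by simp [h1], by simp [h2]⟩
    · intro v
      have hset : {t | v ∈ Finset.univ.filter (fun v => f v ∈ D.bag t)} = {t | f v ∈ D.bag t} := by
        ext t; simp
      rw [hset]
      exact D.support_connected (f v)
    · intro t
      refine le_trans ?_ (hD t)
      have hom : (G.induce ↑(Finset.univ.filter (fun v => f v ∈ D.bag t))) →g
          (H.induce ↑(D.bag t)) := by
        refine ⟨fun v => ⟨f v.1, by have := v.2; simpa using this⟩, ?_⟩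
        intro a b hab
        exact f.map_adj hab
      have hle : (G.induce ↑(Finset.univ.filter (fun v => f v ∈ D.bag t))).chromaticNumber ≤
          (H.induce ↑(D.bag t)).chromaticNumber := by
        apply chromaticNumber_le_of_forall_imp
        rintro n ⟨C⟩
        exact ⟨C.comp hom⟩
      have hne2 : (H.induce ↑(D.bag t)).chromaticNumber ≠ ⊤ := by
        have h3 := (H.induce ↑(D.bag t)).colorable_of_fintype
        rw [← chromaticNumber_le_iff_colorable] at h3
        exact ne_top_of_le_ne_top (by simp) h3
      exact ENat.toNat_le_toNat hle hne2
  exact Nat.sInf_le key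
end

section
/- For the Burling sequence of graphs G_n with stable-set families S_n (defined recursively below), for every positive integer n there exists a tree-decomposition of G_n such that every bag induces a star forest and every member of S_n is contained in some bag. In particular tree-χ(G_n) ≤ 2. -/
open SimpleGraph

/-- A star forest: every component is a star, equivalently for every edge `uv`,
either `v` is the unique neighbor of `u` or `u` is the unique neighbor of `v`. -/
def IsStarForest {W : Type} (G : SimpleGraph W) : Prop :=
  ∀ u v, G.Adj u v → (∀ w, G.Adj u w → w = v) ∨ (∀ w, G.Adj v w → w = u)

structure BurlingStep where
  V : Type
  G : SimpleGraph V
  S : Set (Set V)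

/-- One step of the Burling construction. -/
def burlingNext (B : BurlingStep) : BurlingStep where
  V := B.V ⊕ ((↥B.S × B.V) ⊕ (↥B.S × ↥B.S))
  G := SimpleGraph.fromRel (fun x y =>
    match x, y with
    | .inl u, .inl v => B.G.Adj u v
    | .inr (.inl (S, u)), .inr (.inl (S', v)) => S = S' ∧ B.G.Adj u v
    | .inr (.inr (S, Q)), .inr (.inl (S', v)) => S = S' ∧ v ∈ (Q : Set B.V)
    | _, _ => False)
  S := {A | ∃ S Q : ↥B.S,
      A = (Sum.inl '' (S : Set B.V)) ∪
            ((fun v => (Sum.inr (Sum.inl (S, v)) : B.V ⊕ ((↥B.S × B.V) ⊕ (↥B.S × ↥B.S)))) ''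
              (Q : Set B.V)) ∨
      A = (Sum.inl '' (S : Set B.V)) ∪ {Sum.inr (Sum.inr (S, Q))}}

/-- `burling n` is the pair `(G_{n+1}, 𝒮_{n+1})` of the Burling sequence. -/
def burling : ℕ → BurlingStep
  | 0 => ⟨Unit, ⊥, {Set.univ}⟩
  | n + 1 => burlingNext (burling n)

/-!
By induction along the construction we carry a tree-decomposition of `G_n` whose bags induce
star forests and in which every `S ∈ 𝒮_n` lies in some bag `t_S`. For the next graph, keep the
old decomposition on the old vertices and, for every `S`, hang a copy of it (living on the copy
`G_S`) from `t_S`, adding `S` to each of its bags: `S` is stable and has no neighbours in `G_S`,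
so its vertices are isolated there. Inside the copy, for every `Q ∈ 𝒮_S` hang a leaf with bag
`S ∪ Q ∪ {v_{S,Q}}` from the copy of `t_Q`; there `v_{S,Q}` is the centre of a star on the
stable set `Q`, and this bag contains both new members `S ∪ Q` and `S ∪ {v_{S,Q}}`.
Star forests are acyclic, hence 2-colourable, which gives tree-χ ≤ 2.
-/

namespace SimpleGraph

variable {V W : Type} {G : SimpleGraph V} {H : SimpleGraph W}

lemma Reachable.iff_of_forall_adj {σ : V → Prop} (hσ : ∀ x y, G.Adj x y → (σ x ↔ σ y))
    {x y : V} (h : G.Reachable x y) : σ x ↔ σ y := by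
  obtain ⟨p⟩ := h
  induction p with
  | nil => rfl
  | cons hxz _ ih => exact (hσ _ _ hxz).trans ih

lemma isBridge_of_separating {σ : V → Prop} {u v : V} (hu : σ u) (hv : ¬σ v)
    (hσ : ∀ x y, G.Adj x y → s(x, y) ≠ s(u, v) → (σ x ↔ σ y)) :
    G.IsBridge s(u, v) := by
  rw [isBridge_iff]
  refine fun h => hv ((h.iff_of_forall_adj fun x y hxy => ?_).mp hu)
  rw [deleteEdges_adj] at hxy
  exact hσ x y hxy.1 hxy.2

lemma isBridge_of_forall_adj_eq {u v : V} (huv : G.Adj u v) (hu : ∀ w, G.Adj u w → w = v) :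
    G.IsBridge s(u, v) := by
  refine isBridge_of_separating (σ := (· = u)) rfl huv.ne' fun x y hxy hne => ?_
  constructor <;> rintro rfl
  · exact absurd (by rw [hu y hxy]) hne
  · exact absurd (by rw [hu x hxy.symm, Sym2.eq_swap]) hne

lemma Connected.induce_image (f : G →g H) {s : Set V} (h : (G.induce s).Connected) :
    (H.induce (f '' s)).Connected :=
  h.map (G := G.induce s) ⟨fun x => ⟨f x, x.1, x.2, rfl⟩, fun hxy => f.map_adj hxy⟩ <| by
    rintro ⟨_, x, hx, rfl⟩
    exact ⟨⟨x, hx⟩, rfl⟩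

lemma connected_induce_singleton (v : V) : (G.induce {v}).Connected := by
  rw [induce_singleton_eq_top]
  exact connected_top

lemma Connected.induce_univ (h : G.Connected) : (G.induce Set.univ).Connected :=
  (induceUnivIso G).symm.connected_iff.mp h

section

variable {α β I : Type} (T : SimpleGraph α) (T' : SimpleGraph β) (a : I → α) (b : I → β)

/-- `T` with one copy of `T'` for each `i : I`, the `i`-th copy joined to `T` by the edge
`a i — b i`. -/
def hang : SimpleGraph (α ⊕ I × β) where
  Adj
    | .inl x, .inl y => T.Adj x y
    | .inr (i, x), .inr (j, y) => i = j ∧ T'.Adj x y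
    | .inl x, .inr (i, y) => x = a i ∧ y = b i
    | .inr (i, y), .inl x => x = a i ∧ y = b i
  symm := ⟨by
    rintro (x | ⟨i, x⟩) (y | ⟨j, y⟩) h
    exacts [h.symm, h, h, ⟨h.1.symm, h.2.symm⟩]⟩
  loopless := ⟨by
    rintro (x | ⟨i, x⟩) h
    exacts [T.irrefl h, T'.irrefl h.2]⟩

namespace hang

@[simp] lemma adj_inl_inl {x y : α} : (hang T T' a b).Adj (.inl x) (.inl y) ↔ T.Adj x y := .rfl

@[simp] lemma adj_inr_inr {i j : I} {x y : β} :
    (hang T T' a b).Adj (.inr (i, x)) (.inr (j, y)) ↔ i = j ∧ T'.Adj x y := .rfl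

@[simp] lemma adj_inl_inr {x : α} {i : I} {y : β} :
    (hang T T' a b).Adj (.inl x) (.inr (i, y)) ↔ x = a i ∧ y = b i := .rfl

@[simp] lemma adj_inr_inl {x : α} {i : I} {y : β} :
    (hang T T' a b).Adj (.inr (i, y)) (.inl x) ↔ x = a i ∧ y = b i := .rfl

def inlHom : T →g hang T T' a b := ⟨Sum.inl, id⟩

def inrHom (i : I) : T' →g hang T T' a b := ⟨fun y => .inr (i, y), fun h => ⟨rfl, h⟩⟩

@[simp] lemma coe_inlHom : ⇑(inlHom T T' a b) = Sum.inl := rfl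

@[simp] lemma coe_inrHom (i : I) : ⇑(inrHom T T' a b i) = fun y => .inr (i, y) := rfl

variable {T T' a b}

lemma induce_connected {s : Set (α ⊕ I × β)} (hl : (T.induce (Sum.inl ⁻¹' s)).Connected)
    (hr : ∀ i y, .inr (i, y) ∈ s → .inl (a i) ∈ s ∧ .inr (i, b i) ∈ s ∧
      (T'.induce ((fun y => .inr (i, y)) ⁻¹' s)).Preconnected) :
    ((hang T T' a b).induce s).Connected := by
  obtain ⟨x₀, hx₀⟩ := hl.nonempty
  have hlc := Connected.induce_image (inlHom T T' a b) hl
  rw [coe_inlHom, Set.image_preimage_eq_inter_range] at hlc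
  refine induce_connected_of_patches (.inl x₀) hx₀ fun {v} hv => ?_
  rcases v with x | ⟨i, y⟩
  · exact ⟨s ∩ Set.range Sum.inl, Set.inter_subset_left, ⟨hx₀, x₀, rfl⟩,
      ⟨hv, x, rfl⟩, hlc.preconnected _ _⟩
  · obtain ⟨hai, hbi, hc⟩ := hr i y hv
    have : Nonempty ((fun y => .inr (i, y)) ⁻¹' s) := ⟨⟨b i, hbi⟩⟩
    have hrc := Connected.induce_image (inrHom T T' a b i) ⟨hc⟩
    rw [coe_inrHom, Set.image_preimage_eq_inter_range] at hrc
    have hun := connected_induce_union hlc.preconnected hrc.preconnected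
      ⟨hai, a i, rfl⟩ ⟨hbi, b i, rfl⟩ (by simp)
    exact ⟨s ∩ Set.range Sum.inl ∪ s ∩ Set.range fun y => .inr (i, y),
      Set.union_subset Set.inter_subset_left Set.inter_subset_left,
      .inl ⟨hx₀, x₀, rfl⟩, .inr ⟨hv, y, rfl⟩, hun.preconnected _ _⟩

lemma induce_connected_of_subset_range {i : I} {s : Set (α ⊕ I × β)}
    (hs : s ⊆ Set.range fun y => .inr (i, y))
    (h : (T'.induce ((fun y => .inr (i, y)) ⁻¹' s)).Connected) :
    ((hang T T' a b).induce s).Connected := by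
  rw [← Set.image_preimage_eq_of_subset hs]
  exact h.induce_image (inrHom T T' a b i)

lemma connected (hT : T.Connected) (hT' : T'.Connected) : (hang T T' a b).Connected := by
  refine (induceUnivIso _).connected_iff.mp (induce_connected ?_ fun i y _ => ?_)
  · simpa using hT.induce_univ
  · exact ⟨trivial, trivial, by simpa using hT'.induce_univ.preconnected⟩

lemma isBridge_inl_inl (hT : T.IsAcyclic) {x y : α} (h : T.Adj x y) :
    (hang T T' a b).IsBridge s(.inl x, .inl y) := by
  set K := T.deleteEdges {s(x, y)}
  -- each copy of `T'` lies on the same side of `xy` as its attachment point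
  refine isBridge_of_separating (σ := fun p => K.Reachable x (p.elim id fun q => a q.1))
    (Reachable.refl _) (isBridge_iff.mp (isAcyclic_iff_forall_adj_isBridge.mp hT h)) ?_
  rintro (x' | ⟨i, x'⟩) (y' | ⟨j, y'⟩) hadj hne
  · have hK : K.Adj x' y' := by simp_all [K]
    exact ⟨fun h => h.trans hK.reachable, fun h => h.trans hK.symm.reachable⟩
  all_goals simp [hadj.1]

lemma isBridge_inr_inr (hT' : T'.IsAcyclic) {i : I} {x y : β} (h : T'.Adj x y) :
    (hang T T' a b).IsBridge s(.inr (i, x), .inr (i, y)) := by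
  classical
  set K := T'.deleteEdges {s(x, y)}
  -- everything outside the `i`-th copy lies on the same side of `xy` as `b i`
  refine isBridge_of_separating
    (σ := fun p => K.Reachable x (p.elim (fun _ => b i) fun q => if q.1 = i then q.2 else b i))
    (by simp) (by simpa using isBridge_iff.mp (isAcyclic_iff_forall_adj_isBridge.mp hT' h)) ?_
  rintro (x' | ⟨i', x'⟩) (y' | ⟨j', y'⟩) hadj hne
  · rfl
  · obtain ⟨rfl, rfl⟩ := hadj
    rcases eq_or_ne j' i with rfl | hj <;> simp [*]
  · obtain ⟨rfl, rfl⟩ := hadj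
    rcases eq_or_ne i' i with rfl | hi <;> simp [*]
  · obtain ⟨rfl, hadj⟩ := hadj
    rcases eq_or_ne i' i with rfl | hi
    · have hK : K.Adj x' y' := by simp_all [K]
      simpa using ⟨fun h => h.trans hK.reachable, fun h => h.trans hK.symm.reachable⟩
    · simp [hi]

lemma isBridge_inl_inr (i : I) : (hang T T' a b).IsBridge s(.inl (a i), .inr (i, b i)) := by
  refine isBridge_of_separating (σ := fun p => p.elim (fun _ => True) fun q => q.1 ≠ i)
    trivial (by simp) ?_
  rintro (x' | ⟨i', x'⟩) (y' | ⟨j', y'⟩) hadj hne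
  · rfl
  · obtain ⟨rfl, rfl⟩ := hadj
    simpa using fun h : j' = i => hne (by rw [h])
  · obtain ⟨rfl, rfl⟩ := hadj
    simpa using fun h : i' = i => hne (by rw [h, Sym2.eq_swap])
  · simp [hadj.1]

lemma isAcyclic (hT : T.IsAcyclic) (hT' : T'.IsAcyclic) : (hang T T' a b).IsAcyclic := by
  rw [isAcyclic_iff_forall_adj_isBridge]
  rintro (x | ⟨i, x⟩) (y | ⟨j, y⟩) h
  · exact isBridge_inl_inl hT h
  · obtain ⟨rfl, rfl⟩ := h
    exact isBridge_inl_inr j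
  · obtain ⟨rfl, rfl⟩ := h
    rw [Sym2.eq_swap]
    exact isBridge_inl_inr i
  · obtain ⟨rfl, h⟩ := h
    exact isBridge_inr_inr hT' h

lemma isTree (hT : T.IsTree) (hT' : T'.IsTree) : (hang T T' a b).IsTree :=
  ⟨connected hT.connected hT'.connected, isAcyclic hT.isAcyclic hT'.isAcyclic⟩

end hang

end

end SimpleGraph

namespace IsStarForest

variable {V W : Type} {G : SimpleGraph V} {H : SimpleGraph W}

lemma isAcyclic (h : IsStarForest G) : G.IsAcyclic := by
  refine isAcyclic_iff_forall_adj_isBridge.mpr fun u v huv => ?_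
  rcases h u v huv with hu | hv
  · exact isBridge_of_forall_adj_eq huv hu
  · rw [Sym2.eq_swap]
    exact isBridge_of_forall_adj_eq huv.symm hv

lemma chiNat_le_two (h : IsStarForest G) : chiNat G ≤ 2 :=
  ENat.toNat_le_of_le_natCast h.isAcyclic.chromaticNumber_le_two

lemma image (f : G ↪g H) {s : Set V} (h : IsStarForest (G.induce s)) :
    IsStarForest (H.induce (f '' s)) := by
  rintro ⟨_, u, hu, rfl⟩ ⟨_, v, hv, rfl⟩ huv
  refine (h ⟨u, hu⟩ ⟨v, hv⟩ (f.map_adj_iff.mp huv)).imp ?_ ?_ <;>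
  · rintro hx ⟨_, w, hw, rfl⟩ hxw
    obtain rfl : w = _ := congrArg Subtype.val (hx ⟨w, hw⟩ (f.map_adj_iff.mp hxw))
    rfl

lemma induce_union {s t : Set V} (ht : IsStarForest (G.induce t))
    (hs : ∀ u ∈ s, ∀ v ∈ s ∪ t, ¬G.Adj u v) : IsStarForest (G.induce (s ∪ t)) := by
  have mem_t : ∀ u ∈ s ∪ t, ∀ v ∈ s ∪ t, G.Adj u v → u ∈ t := fun u hu v hv huv =>
    hu.resolve_left fun hus => hs u hus v hv huv
  rintro ⟨u, hu⟩ ⟨v, hv⟩ huv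
  refine (ht ⟨u, mem_t u hu v hv huv⟩ ⟨v, mem_t v hv u hu huv.symm⟩ huv).imp ?_ ?_
  · rintro hx ⟨w, hw⟩ huw
    simpa using hx ⟨w, mem_t w hw u hu huw.symm⟩ huw
  · rintro hx ⟨w, hw⟩ hvw
    simpa using hx ⟨w, mem_t w hw v hv hvw.symm⟩ hvw

end IsStarForest

lemma isStarForest_of_forall_adj {V : Type} {G : SimpleGraph V} (c : V)
    (h : ∀ u v, G.Adj u v → u = c ∨ v = c) : IsStarForest G := by
  intro u v huv
  rcases h u v huv with rfl | rfl
  · exact .inr fun w hw => (h v w hw).resolve_left huv.ne'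
  · exact .inl fun w hw => (h u w hw).resolve_left huv.ne

namespace TreeDecomp

variable {V ι : Type} {G : SimpleGraph V}

noncomputable def ofFinite (tree : SimpleGraph ι) (isTree : tree.IsTree) (bag : ι → Set V)
    (finite : ∀ t, (bag t).Finite)
    (covers_edge : ∀ ⦃u v : V⦄, G.Adj u v → ∃ t, u ∈ bag t ∧ v ∈ bag t)
    (support_connected : ∀ v : V, (tree.induce {t | v ∈ bag t}).Connected) : TreeDecomp G where
  ι := ι
  tree := tree
  isTree := isTree
  bag t := (finite t).toFinset
  covers_edge := by simpa using covers_edge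
  support_connected v := by
    have : {t | v ∈ (finite t).toFinset} = {t | v ∈ bag t} := by ext; simp
    exact this ▸ support_connected v

lemma coe_bag_ofFinite {tree : SimpleGraph ι} {isTree : tree.IsTree} {bag : ι → Set V}
    {finite : ∀ t, (bag t).Finite}
    {covers_edge : ∀ ⦃u v : V⦄, G.Adj u v → ∃ t, u ∈ bag t ∧ v ∈ bag t}
    {support_connected : ∀ v : V, (tree.induce {t | v ∈ bag t}).Connected} (t : ι) :
    ↑((ofFinite tree isTree bag finite covers_edge support_connected).bag t) = bag t :=
  Set.Finite.coe_toFinset _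

end TreeDecomp

namespace BurlingStep

variable (B : BurlingStep)

/-- The vertex type of `burlingNext B`, spelled out so that `simp` sees its sum structure. -/
abbrev NextV : Type := B.V ⊕ (B.S × B.V ⊕ B.S × B.S)

/-- The copy of `u` in the copy `G_S` of `G`. -/
abbrev copy (S : B.S) (u : B.V) : B.NextV := .inr (.inl (S, u))

/-- The vertex `v_{S,Q}`. -/
abbrev apex (S Q : B.S) : B.NextV := .inr (.inr (S, Q))

variable {B} {u v : B.V} {S S' Q Q' : B.S}

@[simp] lemma adj_inl_inl : (burlingNext B).G.Adj (.inl u) (.inl v) ↔ B.G.Adj u v := by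
  simp only [burlingNext, fromRel_adj, ne_eq, Sum.inl.injEq, B.G.adj_comm v u, or_self]
  exact and_iff_right_of_imp fun h => h.ne

@[simp] lemma adj_copy_copy :
    (burlingNext B).G.Adj (B.copy S u) (B.copy S' v) ↔ S = S' ∧ B.G.Adj u v := by
  simp only [burlingNext, fromRel_adj, ne_eq, Sum.inr.injEq, Sum.inl.injEq, Prod.mk.injEq,
    B.G.adj_comm v u, @eq_comm _ S' S, or_self]
  exact and_iff_right_of_imp fun h ⟨_, huv⟩ => h.2.ne huv

@[simp] lemma adj_copy_apex :
    (burlingNext B).G.Adj (B.copy S u) (B.apex S' Q) ↔ S = S' ∧ u ∈ (Q : Set B.V) := by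
  simp [burlingNext, eq_comm]

@[simp] lemma adj_apex_copy :
    (burlingNext B).G.Adj (B.apex S' Q) (B.copy S u) ↔ S' = S ∧ u ∈ (Q : Set B.V) := by
  simp [burlingNext, eq_comm]

@[simp] lemma not_adj_inl_copy : ¬(burlingNext B).G.Adj (.inl u) (B.copy S v) := by
  simp [burlingNext]

@[simp] lemma not_adj_copy_inl : ¬(burlingNext B).G.Adj (B.copy S v) (.inl u) := by
  simp [burlingNext]

@[simp] lemma not_adj_inl_apex : ¬(burlingNext B).G.Adj (.inl u) (B.apex S Q) := by
  simp [burlingNext]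

@[simp] lemma not_adj_apex_inl : ¬(burlingNext B).G.Adj (B.apex S Q) (.inl u) := by
  simp [burlingNext]

@[simp] lemma not_adj_apex_apex : ¬(burlingNext B).G.Adj (B.apex S Q) (B.apex S' Q') := by
  simp [burlingNext]

def inlEmb : B.G ↪g (burlingNext B).G where
  toFun := Sum.inl
  inj' := Sum.inl_injective
  map_rel_iff' := adj_inl_inl

def copyEmb (S : B.S) : B.G ↪g (burlingNext B).G where
  toFun := B.copy S
  inj' := (Sum.inr_injective.comp Sum.inl_injective).comp (Prod.mk_right_injective S)
  map_rel_iff' := adj_copy_copy.trans (and_iff_right rfl)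

lemma isIndepSet_next (h : ∀ A ∈ B.S, B.G.IsIndepSet A) :
    ∀ A ∈ (burlingNext B).S, (burlingNext B).G.IsIndepSet A := by
  rintro A ⟨S, Q, rfl | rfl⟩
  · rintro _ (⟨u, hu, rfl⟩ | ⟨u, hu, rfl⟩) _ (⟨v, hv, rfl⟩ | ⟨v, hv, rfl⟩) hne
    · simpa using h S S.2 hu hv (ne_of_apply_ne _ hne)
    · simp
    · simp
    · simpa using h Q Q.2 hu hv (ne_of_apply_ne (B.copy S) hne)
  · rintro _ (⟨u, hu, rfl⟩ | rfl) _ (⟨v, hv, rfl⟩ | rfl) hne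
    · simpa using h S S.2 hu hv (ne_of_apply_ne _ hne)
    all_goals simp

lemma inl_image_isolated {S : Set B.V} (hS : B.G.IsIndepSet S) {X : Set B.NextV}
    (hX : ∀ u, .inl u ∉ X) :
    ∀ x ∈ Sum.inl '' S, ∀ y ∈ Sum.inl '' S ∪ X, ¬(burlingNext B).G.Adj x y := by
  rintro _ ⟨u, hu, rfl⟩ y (⟨v, hv, rfl⟩ | hy) h
  · exact hS hu hv (ne_of_apply_ne Sum.inl h.ne) (adj_inl_inl.mp h)
  · rcases y with w | ⟨S', w⟩ | ⟨S', Q⟩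
    · exact hX w hy
    · simp at h
    · simp at h

lemma isStarForest_insert_apex (hQ : B.G.IsIndepSet Q) :
    IsStarForest ((burlingNext B).G.induce (insert (B.apex S Q) (B.copy S '' Q))) := by
  refine isStarForest_of_forall_adj ⟨B.apex S Q, Set.mem_insert _ _⟩ ?_
  rintro ⟨_, rfl | ⟨u, hu, rfl⟩⟩ ⟨_, rfl | ⟨v, hv, rfl⟩⟩ h
  · exact .inl rfl
  · exact .inl rfl
  · exact .inr rfl
  · have huv := (adj_copy_copy.mp h).2
    exact absurd huv (hQ hu hv huv.ne)

section nextDecomp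

variable (B) (D : TreeDecomp B.G) (tS : B.S → D.ι)

/-- Indexes the bags of a copy `G_S`: the tree of `D` with a leaf hung from `tS Q` for each `Q`,
whose bag will contain `v_{S,Q}`. -/
abbrev copyTree : SimpleGraph (D.ι ⊕ B.S × Unit) := hang D.tree ⊥ tS fun _ => ()

def nextTree : SimpleGraph (D.ι ⊕ B.S × (D.ι ⊕ B.S × Unit)) :=
  hang D.tree (copyTree B D tS) tS fun S => .inl (tS S)

def nextBag : D.ι ⊕ B.S × (D.ι ⊕ B.S × Unit) → Set B.NextV
  | .inl t => .inl '' D.bag t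
  | .inr (S, .inl t) => .inl '' S ∪ B.copy S '' D.bag t
  | .inr (S, .inr (Q, _)) => .inl '' S ∪ insert (B.apex S Q) (B.copy S '' Q)

variable {B D tS}

lemma nextTree_isTree : (nextTree B D tS).IsTree :=
  hang.isTree D.isTree (hang.isTree D.isTree .of_subsingleton)

lemma nextBag_covers ⦃x y : B.NextV⦄ (h : (burlingNext B).G.Adj x y) :
    ∃ p, x ∈ nextBag B D p ∧ y ∈ nextBag B D p := by
  rcases x with u | ⟨S, u⟩ | ⟨S, Q⟩ <;> rcases y with v | ⟨S', v⟩ | ⟨S', Q'⟩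
  · obtain ⟨t, hu, hv⟩ := D.covers_edge (adj_inl_inl.mp h)
    exact ⟨.inl t, by simpa [nextBag] using hu, by simpa [nextBag] using hv⟩
  · simp at h
  · simp at h
  · simp at h
  · obtain ⟨rfl, huv⟩ := adj_copy_copy.mp h
    obtain ⟨t, hu, hv⟩ := D.covers_edge huv
    exact ⟨.inr (S, .inl t), by simpa [nextBag] using hu, by simpa [nextBag] using hv⟩
  · obtain ⟨rfl, hu⟩ := adj_copy_apex.mp h
    exact ⟨.inr (S, .inr (Q', ())), by simpa [nextBag] using hu, by simp [nextBag]⟩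
  · simp at h
  · obtain ⟨rfl, hv⟩ := adj_apex_copy.mp h
    exact ⟨.inr (S, .inr (Q, ())), by simp [nextBag], by simpa [nextBag] using hv⟩
  · simp at h

lemma nextBag_isStarForest (hB : ∀ A ∈ B.S, B.G.IsIndepSet A)
    (hD : ∀ t, IsStarForest (B.G.induce (D.bag t))) (p : D.ι ⊕ B.S × (D.ι ⊕ B.S × Unit)) :
    IsStarForest ((burlingNext B).G.induce (nextBag B D p)) := by
  rcases p with t | ⟨S, t | ⟨Q, _⟩⟩
  · exact (hD t).image inlEmb
  · exact ((hD t).image (copyEmb S)).induce_union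
      (inl_image_isolated (hB S S.2) (X := B.copy S '' D.bag t) (by simp))
  · exact (isStarForest_insert_apex (hB Q Q.2)).induce_union
      (inl_image_isolated (hB S S.2) (X := insert (B.apex S Q) (B.copy S '' Q)) (by simp))

lemma nextBag_support_apex (S Q : B.S) :
    ((nextTree B D tS).induce {p | B.apex S Q ∈ nextBag B D p}).Connected := by
  have : {p | B.apex S Q ∈ nextBag B D p} = {.inr (S, .inr (Q, ()))} := by
    ext (t | ⟨S', t | ⟨Q', _⟩⟩) <;> simp [nextBag, eq_comm]
  rw [this]
  exact connected_induce_singleton _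

variable (htS : ∀ S : B.S, (S : Set B.V) ⊆ D.bag (tS S))
include htS

lemma nextBag_finite (p : D.ι ⊕ B.S × (D.ι ⊕ B.S × Unit)) : (nextBag B D p).Finite := by
  have hS (S : B.S) : (S : Set B.V).Finite := (D.bag (tS S)).finite_toSet.subset (htS S)
  rcases p with t | ⟨S, t | ⟨Q, _⟩⟩
  · exact (D.bag t).finite_toSet.image _
  · exact ((hS S).image _).union ((D.bag t).finite_toSet.image _)
  · exact ((hS S).image _).union (((hS Q).image _).insert _)

lemma nextBag_support_inl (u : B.V) :
    ((nextTree B D tS).induce {p | .inl u ∈ nextBag B D p}).Connected := by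
  refine hang.induce_connected ?_ fun S q hq => ?_
  · have : Sum.inl ⁻¹' {p | .inl u ∈ nextBag B D p} = {t | u ∈ D.bag t} := by
      ext; simp [nextBag]
    rw [this]
    exact D.support_connected u
  have huS : u ∈ (S : Set B.V) := by rcases q with t | ⟨Q, _⟩ <;> simpa [nextBag] using hq
  have huniv : (fun q => .inr (S, q)) ⁻¹' {p | .inl u ∈ nextBag B D p} = Set.univ :=
    Set.eq_univ_of_forall fun q => by rcases q with t | ⟨Q, _⟩ <;> simpa [nextBag] using huS
  refine ⟨by simpa [nextBag] using htS S huS, by simpa [nextBag] using huS, ?_⟩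
  rw [huniv]
  exact (hang.connected D.isTree.connected .of_subsingleton).induce_univ.preconnected

lemma nextBag_support_copy (S : B.S) (u : B.V) :
    ((nextTree B D tS).induce {p | B.copy S u ∈ nextBag B D p}).Connected := by
  refine hang.induce_connected_of_subset_range (i := S) ?_ ?_
  · rintro (t | ⟨S', q⟩) hp
    · simp [nextBag] at hp
    · obtain rfl : S' = S := by rcases q with t | ⟨Q, _⟩ <;> simp_all [nextBag]
      exact ⟨q, rfl⟩
  refine hang.induce_connected ?_ fun Q _ hQ => ?_
  · have : Sum.inl ⁻¹' ((fun q => .inr (S, q)) ⁻¹' {p | B.copy S u ∈ nextBag B D p}) =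
        {t | u ∈ D.bag t} := by
      ext; simp [nextBag]
    rw [this]
    exact D.support_connected u
  · have huQ : u ∈ (Q : Set B.V) := by simpa [nextBag] using hQ
    exact ⟨by simpa [nextBag] using htS Q huQ, hQ, .of_subsingleton⟩

lemma nextBag_support (x : B.NextV) :
    ((nextTree B D tS).induce {p | x ∈ nextBag B D p}).Connected := by
  rcases x with u | ⟨S, u⟩ | ⟨S, Q⟩
  · exact nextBag_support_inl htS u
  · exact nextBag_support_copy htS S u
  · exact nextBag_support_apex S Q

end nextDecomp

def IsStarDecomp (B : BurlingStep) (D : TreeDecomp B.G) : Prop :=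
  (∀ t, IsStarForest (B.G.induce ↑(D.bag t))) ∧ ∀ A ∈ B.S, ∃ t, A ⊆ ↑(D.bag t)

lemma exists_isStarDecomp_next (hB : ∀ A ∈ B.S, B.G.IsIndepSet A) {D : TreeDecomp B.G}
    (hD : B.IsStarDecomp D) :
    ∃ D' : TreeDecomp (burlingNext B).G, (burlingNext B).IsStarDecomp D' := by
  choose tS htS using fun S : B.S => hD.2 S S.2
  let D' : TreeDecomp (burlingNext B).G := .ofFinite (nextTree B D tS) nextTree_isTree
    (nextBag B D) (nextBag_finite htS) nextBag_covers (nextBag_support htS)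
  have hbag (p : D'.ι) : (↑(D'.bag p) : Set (burlingNext B).V) = nextBag B D p :=
    TreeDecomp.coe_bag_ofFinite p
  refine ⟨D', fun p => ?_, ?_⟩
  · rw [hbag]
    exact nextBag_isStarForest hB hD.1 p
  · rintro A ⟨S, Q, rfl | rfl⟩ <;>
      refine ⟨.inr (S, .inr (Q, ())), subset_trans ?_ (hbag _).ge⟩
    · exact Set.union_subset_union_right _ (Set.subset_insert _ _)
    · exact Set.union_subset_union_right _ (Set.singleton_subset_iff.mpr (Set.mem_insert _ _))

end BurlingStep

lemma burling_isIndepSet (n : ℕ) : ∀ A ∈ (burling n).S, (burling n).G.IsIndepSet A := by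
  induction n with
  | zero => exact fun _ _ _ _ _ _ _ h => h
  | succ n ih => exact BurlingStep.isIndepSet_next ih

lemma exists_isStarDecomp_burling (n : ℕ) : ∃ D, (burling n).IsStarDecomp D := by
  induction n with
  | zero =>
    have hsupp (v : Unit) : Nonempty {t : Unit | v ∈ ({()} : Finset Unit)} :=
      ⟨(), Finset.mem_singleton_self _⟩
    refine ⟨⟨Unit, ⊥, .of_subsingleton, fun _ => {()}, fun _ _ h => False.elim h,
      fun v => (connected_iff _).mpr ⟨.of_subsingleton, hsupp v⟩⟩,
      fun _ _ _ h => False.elim h, fun _ _ => ⟨(), fun _ _ => Finset.mem_singleton_self _⟩⟩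
  | succ n ih =>
    obtain ⟨D, hD⟩ := ih
    exact BurlingStep.exists_isStarDecomp_next (burling_isIndepSet n) hD

theorem stmt13 (n : ℕ) :
    (∃ D : TreeDecomp (burling n).G,
      (∀ t, IsStarForest ((burling n).G.induce ↑(D.bag t))) ∧
      (∀ A ∈ (burling n).S, ∃ t, A ⊆ ↑(D.bag t))) ∧
    treeChi (burling n).G ≤ 2 := by
  obtain ⟨D, hstar, hsub⟩ := exists_isStarDecomp_burling n
  exact ⟨⟨D, hstar, hsub⟩, Nat.sInf_le ⟨D, fun t => (hstar t).chiNat_le_two⟩⟩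
end
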